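/- Let E be a row-finite graph and v ∈ E^0. The vertex v is a line-point (v has no bifurcation and v does not connect to a cycle) if and only if v = v(0) ∈ M_E^{gr} is minimal and aperiodic (there is no nonzero n ∈ ℤ with ^n v = v). -/

import Mathlib

set_option linter.unusedSectionVars false

/-- The algebraic preorder on a commutative monoid: `a ≤ b` iff `b = a + c` for some `c`. -/
def algLE {M : Type*} [AddCommMonoid M] (a b : M) : Prop := ∃ c, b = a + c

/-- A row-finite directed graph: vertices `V`, edges `Ed`, source `s`, range `r`,
and for each vertex the (finite) set of edges it emits. -/
structure RFGraph (V : Type) (Ed : Type) where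
  s : Ed → V
  r : Ed → V
  emit : V → Finset Ed
  mem_emit : ∀ e v, e ∈ emit v ↔ s e = v

namespace RFGraph

variable {V Ed : Type} [DecidableEq V] (G : RFGraph V Ed)

/-- The one-step rewriting relation `→₁` on the free commutative monoid `Multiset V`:
replace one occurrence of a non-sink vertex `v` by the sum of ranges of edges emitted by `v`. -/
def Step1 (a b : Multiset V) : Prop :=
  ∃ v : V, v ∈ a ∧ G.emit v ≠ ∅ ∧ b = a.erase v + (G.emit v).val.map G.r

/-- The reflexive-transitive closure `→` of `→₁`. -/
def Step : Multiset V → Multiset V → Prop := Relation.ReflTransGen G.Step1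

/-- The congruence on the free commutative monoid generated by `→₁`. -/
def gcon : AddCon (Multiset V) := addConGen G.Step1

/-- The graph monoid `M_E`. -/
def GM := G.gcon.Quotient

instance : AddCommMonoid G.GM := inferInstanceAs (AddCommMonoid G.gcon.Quotient)

/-- One-step rewriting for the talented monoid: replace `v(i)` by `Σ_{e ∈ s⁻¹(v)} r(e)(i+1)`. -/
def TStep1 (a b : Multiset (V × ℤ)) : Prop :=
  ∃ (v : V) (i : ℤ), (v, i) ∈ a ∧ G.emit v ≠ ∅ ∧
    b = a.erase (v, i) + (G.emit v).val.map (fun e => (G.r e, i + 1))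

/-- The congruence generated by the talented one-step relation. -/
def tcon : AddCon (Multiset (V × ℤ)) := addConGen G.TStep1

/-- The talented monoid `M_E^{gr}`. -/
def TM := G.tcon.Quotient

instance : AddCommMonoid G.TM := inferInstanceAs (AddCommMonoid G.tcon.Quotient)

/-- The generator `v(i)` of the talented monoid. -/
def tgen (v : V) (i : ℤ) : G.TM := G.tcon.mk' {(v, i)}

/-- The shift `v(i) ↦ v(i+n)` on the free commutative monoid `Multiset (V × ℤ)`. -/
def shiftMul (n : ℤ) : Multiset (V × ℤ) →+ Multiset (V × ℤ) where
  toFun a := a.map fun p => (p.1, p.2 + n)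
  map_zero' := rfl
  map_add' a b := Multiset.map_add (fun p => (p.1, p.2 + n)) a b

lemma shift_inj (n : ℤ) : Function.Injective (fun p : V × ℤ => (p.1, p.2 + n)) := by
  rintro ⟨a, b⟩ ⟨c, d⟩ h
  simp only [Prod.mk.injEq] at h
  exact Prod.ext h.1 (by omega)

lemma tstep1_shift (n : ℤ) {a b : Multiset (V × ℤ)} (h : G.TStep1 a b) :
    G.TStep1 (shiftMul n a) (shiftMul n b) := by
  obtain ⟨v, i, hv, hne, rfl⟩ := h
  refine ⟨v, i + n, Multiset.mem_map.2 ⟨(v, i), hv, rfl⟩, hne, ?_⟩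
  show Multiset.map _ _ = _
  rw [Multiset.map_add]
  congr 1
  · exact (Multiset.map_erase _ (shift_inj n) (v, i) a)
  · rw [Multiset.map_map]
    congr 1
    funext e
    simp only [Function.comp_apply]
    congr 1
    omega

lemma tcon_shift (n : ℤ) {a b : Multiset (V × ℤ)} (h : G.tcon a b) :
    G.tcon (shiftMul n a) (shiftMul n b) := by
  have hle : addConGen G.TStep1 ≤
      { r := fun a b => G.tcon (shiftMul n a) (shiftMul n b)
        iseqv := ⟨fun _ => G.tcon.refl _, fun h => G.tcon.symm h,
          fun h₁ h₂ => G.tcon.trans h₁ h₂⟩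
        add' := fun h₁ h₂ => by
          simpa only [map_add] using G.tcon.add h₁ h₂ } := by
    refine AddCon.addConGen_le.2 ?_
    intro x y hxy
    exact AddConGen.Rel.of _ _ (G.tstep1_shift n hxy)
  exact hle h

/-- The `ℤ`-action on the talented monoid, `ⁿ(v(i)) = v(i+n)`. -/
def tshift (n : ℤ) : G.TM →+ G.TM :=
  G.tcon.lift (G.tcon.mk'.comp (shiftMul n)) (by
    intro a b h
    show G.tcon.mk' (shiftMul n a) = G.tcon.mk' (shiftMul n b)
    exact (AddCon.eq _).2 (G.tcon_shift n h))

/-- Reachability: there is a (possibly trivial) path from `u` to `v`. -/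
def Reaches (u v : V) : Prop :=
  Relation.ReflTransGen (fun a b => ∃ e : Ed, G.s e = a ∧ G.r e = b) u v

/-- A cycle: a nonempty path of edges, closed up, with distinct source vertices. -/
def IsCycle (p : List Ed) : Prop :=
  ∃ h : p ≠ [], List.Chain' (fun e f => G.r e = G.s f) p ∧
    G.r (p.getLast h) = G.s (p.head h) ∧ (p.map G.s).Nodup

/-- The cycle `p` has an exit: some vertex on it emits an edge not on the cycle. -/
def HasExit (p : List Ed) : Prop :=
  ∃ e : Ed, (∃ f ∈ p, G.s e = G.s f) ∧ e ∉ p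

/-- The cycle `p` has no exit: every vertex on it emits exactly its cycle edge. -/
def NoExit (p : List Ed) : Prop :=
  ∀ e ∈ p, G.emit (G.s e) = {e}

/-- `ℤ`-order-ideals of the talented monoid. -/
def IsOrderIdeal (I : Set G.TM) : Prop :=
  (0 : G.TM) ∈ I ∧ (∀ a b : G.TM, a ∈ I → b ∈ I → a + b ∈ I) ∧
    (∀ (n : ℤ) (a : G.TM), a ∈ I → G.tshift n a ∈ I) ∧
    (∀ a b : G.TM, algLE a b → b ∈ I → a ∈ I)

/-- The smallest `ℤ`-order-ideal of `M_E^{gr}` containing `v(0)`. -/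
def genIdeal (v : V) : Set G.TM :=
  ⋂₀ {I : Set G.TM | G.IsOrderIdeal I ∧ G.tgen v 0 ∈ I}

/-- Minimality in the talented monoid: `0 ≠ b ≤ a` implies `a ≤ b`. -/
def TMin (a : G.TM) : Prop := ∀ b : G.TM, b ≠ 0 → algLE b a → algLE a b

/-- The covering graph `\bar E`. -/
def cover : RFGraph (V × ℤ) (Ed × ℤ) where
  s p := (G.s p.1, p.2)
  r p := (G.r p.1, p.2 + 1)
  emit p := (G.emit p.1).map ⟨fun e => (e, p.2), fun a b h => by
    simpa using congrArg Prod.fst h⟩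
  mem_emit := by
    rintro ⟨e, n⟩ ⟨v, m⟩
    simp only [Finset.mem_map, Function.Embedding.coeFn_mk, Prod.mk.injEq, G.mem_emit]
    constructor
    · rintro ⟨a, ha, rfl, rfl⟩; exact ⟨ha, rfl⟩
    · rintro ⟨rfl, rfl⟩
      first
        | exact ⟨e, rfl, rfl, rfl⟩
        | exact ⟨e, rfl, rfl⟩
        | exact ⟨rfl, rfl⟩
        | rfl
        | simp

/-- The set of vertices on a cycle. -/
def cycVerts (p : List Ed) : Set V := {v | ∃ e ∈ p, G.s e = v}

end RFGraph

/-! Under no bifurcation, rewriting `v(i)` in the talented monoid is deterministic: its reducts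
are the single generators `w(i + |L|)` for the walks `L` from `v` to `w`. As the congruence is
joinability for a locally confluent rewriting, `v(0)` then splits only trivially (minimality),
and `v(i) = v(j)` with `i ≠ j` produces two walks of different lengths from `v` to one vertex,
one a prefix of the other, hence a closed walk and a cycle.

Conversely, a bifurcation at `u` reachable from `v` gives `v(0) = r(e₁)(k+1) + x` with `x ≠ 0`;
minimality would then make `r(e₁)(k+1)` absorb a nonzero element, which a path-counting weight,
invariant under rewriting below a fixed level, forbids. A cycle through a vertex reachable from
a vertex without bifurcation gives `v(0) = v(|C|)` directly. -/

lemma List.exists_eq_append_of_not_nodup_map {α β : Type*} {f : α → β} {l : List α}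
    (h : ¬ (l.map f).Nodup) :
    ∃ l₁ x l₂ y l₃, l = l₁ ++ x :: (l₂ ++ y :: l₃) ∧ f x = f y := by
  induction l with
  | nil => simp at h
  | cons x l ih =>
    by_cases hx : f x ∈ l.map f
    · obtain ⟨y, hy, hxy⟩ := List.mem_map.1 hx
      obtain ⟨l₂, l₃, rfl⟩ := List.append_of_mem hy
      exact ⟨[], x, l₂, y, l₃, rfl, hxy.symm⟩
    · obtain ⟨l₁, y, l₂, z, l₃, rfl, hyz⟩ :=
        ih fun hl => h (List.nodup_cons.2 ⟨hx, hl⟩)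
      exact ⟨x :: l₁, y, l₂, z, l₃, rfl, hyz⟩

namespace RFGraph

section Walks

variable {V Ed : Type} (G : RFGraph V Ed)

def IsWalk : V → List Ed → V → Prop
  | a, [], b => a = b
  | a, e :: L, b => G.s e = a ∧ IsWalk (G.r e) L b

def NoBifurcation (v : V) : Prop := ∀ u, G.Reaches v u → (G.emit u).card ≤ 1

def ConnectsToCycle (v : V) : Prop := ∃ p, G.IsCycle p ∧ ∃ e ∈ p, G.Reaches v (G.s e)

variable {G} {a b v w : V} {L L₁ L₂ : List Ed}

@[simp] lemma isWalk_nil : G.IsWalk a [] b ↔ a = b := Iff.rfl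

@[simp] lemma isWalk_cons {e : Ed} : G.IsWalk a (e :: L) b ↔ G.s e = a ∧ G.IsWalk (G.r e) L b :=
  Iff.rfl

lemma isWalk_append :
    G.IsWalk a (L₁ ++ L₂) b ↔ ∃ c, G.IsWalk a L₁ c ∧ G.IsWalk c L₂ b := by
  induction L₁ generalizing a with
  | nil => simp
  | cons e L ih => simp [ih, and_assoc]

lemma IsWalk.reaches (h : G.IsWalk a L b) : G.Reaches a b := by
  induction L generalizing a with
  | nil => exact h ▸ .refl
  | cons e L ih => exact .head ⟨e, h.1, rfl⟩ (ih h.2)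

lemma IsWalk.reaches_src (h : G.IsWalk a L b) {e : Ed} (he : e ∈ L) : G.Reaches a (G.s e) := by
  obtain ⟨L₁, L₂, rfl⟩ := List.append_of_mem he
  obtain ⟨c, h₁, hc, -⟩ := isWalk_append.1 h
  exact hc ▸ h₁.reaches

lemma exists_isWalk_of_reaches (h : G.Reaches a b) : ∃ L, G.IsWalk a L b := by
  induction h using Relation.ReflTransGen.head_induction_on with
  | refl => exact ⟨[], rfl⟩
  | head hac _ ih =>
    obtain ⟨e, he, rfl⟩ := hac
    obtain ⟨L, hL⟩ := ih
    exact ⟨e :: L, he, hL⟩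

lemma IsWalk.isChain (h : G.IsWalk a L b) (hL : L ≠ []) :
    List.IsChain (fun e f => G.r e = G.s f) L ∧ G.s (L.head hL) = a ∧
      G.r (L.getLast hL) = b := by
  induction L generalizing a with
  | nil => exact absurd rfl hL
  | cons e L ih =>
    cases L with
    | nil => exact ⟨List.isChain_singleton e, h.1, h.2⟩
    | cons f L =>
      obtain ⟨hc, hf, hl⟩ := ih h.2 (List.cons_ne_nil _ _)
      exact ⟨List.isChain_cons_cons.2 ⟨hf.symm, hc⟩, h.1, by rwa [List.getLast_cons_cons]⟩

lemma isWalk_of_isChain {e : Ed} (h : List.IsChain (fun e f => G.r e = G.s f) (e :: L)) :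
    G.IsWalk (G.s e) (e :: L) (G.r ((e :: L).getLast (List.cons_ne_nil _ _))) := by
  induction L generalizing e with
  | nil => exact ⟨rfl, rfl⟩
  | cons f L ih =>
    obtain ⟨hef, hc⟩ := List.isChain_cons_cons.1 h
    rw [List.getLast_cons_cons]
    exact ⟨rfl, hef ▸ ih hc⟩

lemma isCycle_of_isWalk (h : G.IsWalk a L a) (hL : L ≠ []) (hnd : (L.map G.s).Nodup) :
    G.IsCycle L := by
  obtain ⟨hc, hhead, hlast⟩ := h.isChain hL
  exact ⟨hL, hc, hlast.trans hhead.symm, hnd⟩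

lemma IsCycle.exists_isWalk {p : List Ed} (hp : G.IsCycle p) {e : Ed} (he : e ∈ p) :
    ∃ L ≠ [], G.IsWalk (G.s e) L (G.s e) := by
  obtain ⟨hne, hc, hclosed, -⟩ := hp
  obtain ⟨f, p, rfl⟩ := List.exists_cons_of_ne_nil hne
  have hw : G.IsWalk (G.s f) (f :: p) (G.s f) := hclosed ▸ isWalk_of_isChain hc
  obtain ⟨A, B, hAB⟩ := List.append_of_mem he
  rw [hAB] at hw
  obtain ⟨c, hA, hc, hB⟩ := isWalk_append.1 hw
  exact ⟨(e :: B) ++ A, by simp, isWalk_append.2 ⟨_, ⟨rfl, hB⟩, hc ▸ hA⟩⟩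

lemma IsWalk.exists_isCycle_subset (h : G.IsWalk a L a) (hL : L ≠ []) :
    ∃ p, G.IsCycle p ∧ ∀ e ∈ p, e ∈ L := by
  induction hn : L.length using Nat.strong_induction_on generalizing a L with
  | _ n ih =>
    by_cases hnd : (L.map G.s).Nodup
    · exact ⟨L, isCycle_of_isWalk h hL hnd, fun _ => id⟩
    -- a repeated source vertex cuts out a shorter closed walk
    obtain ⟨L₁, f, L₂, g, L₃, rfl, hfg⟩ := List.exists_eq_append_of_not_nodup_map hnd
    obtain ⟨_, -, -, hrest⟩ := isWalk_append.1 h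
    obtain ⟨_, h₂, hg, -⟩ := isWalk_append.1 hrest
    have hloop : G.IsWalk (G.s f) (f :: L₂) (G.s f) := ⟨rfl, hfg ▸ hg ▸ h₂⟩
    obtain ⟨p, hp, hpL⟩ := ih _ (by simp at hn ⊢; omega) hloop (List.cons_ne_nil _ _) rfl
    refine ⟨p, hp, fun e he => ?_⟩
    have := hpL e he
    simp only [List.mem_append, List.mem_cons] at this ⊢
    tauto

lemma IsWalk.connectsToCycle (h : G.IsWalk w L w) (hL : L ≠ []) (hvw : G.Reaches v w) :
    G.ConnectsToCycle v := by
  obtain ⟨p, hp, hpL⟩ := h.exists_isCycle_subset hL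
  obtain ⟨e, he⟩ := List.exists_mem_of_ne_nil p hp.1
  exact ⟨p, hp, e, he, hvw.trans (h.reaches_src (hpL e he))⟩

lemma NoBifurcation.of_reaches (H : G.NoBifurcation v) (h : G.Reaches v w) :
    G.NoBifurcation w :=
  fun u hu => H u (h.trans hu)

lemma NoBifurcation.emit_eq (H : G.NoBifurcation v) {e : Ed} (he : G.s e = v) :
    G.emit v = {e} :=
  Finset.eq_singleton_iff_unique_mem.2 ⟨(G.mem_emit e v).2 he,
    fun f hf => Finset.card_le_one.1 (H v .refl) f hf e ((G.mem_emit e v).2 he)⟩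

lemma NoBifurcation.isWalk_prefix (H : G.NoBifurcation v) (h₁ : G.IsWalk v L₁ a)
    (h₂ : G.IsWalk v L₂ b) (hle : L₁.length ≤ L₂.length) :
    ∃ L, L₂ = L₁ ++ L ∧ G.IsWalk a L b := by
  induction L₁ generalizing v L₂ with
  | nil => exact ⟨L₂, rfl, h₁ ▸ h₂⟩
  | cons e L₁ ih =>
    obtain _ | ⟨f, L₂⟩ := L₂
    · simp at hle
    have hfe : f = e := by simpa [H.emit_eq h₁.1] using (G.mem_emit f v).2 h₂.1
    subst hfe
    obtain ⟨L, rfl, hL⟩ := ih (H.of_reaches (.single ⟨f, h₁.1, rfl⟩)) h₁.2 h₂.2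
      (by simpa using hle)
    exact ⟨L, rfl, hL⟩

end Walks

section Rewriting

variable {V Ed : Type} [DecidableEq V] (G : RFGraph V Ed)

def TStep : Multiset (V × ℤ) → Multiset (V × ℤ) → Prop := Relation.ReflTransGen G.TStep1

variable {G} {a b c d : Multiset (V × ℤ)}

lemma TStep1.add_right (h : G.TStep1 a b) (c : Multiset (V × ℤ)) :
    G.TStep1 (a + c) (b + c) := by
  obtain ⟨v, i, hm, hne, rfl⟩ := h
  refine ⟨v, i, Multiset.mem_add.2 (Or.inl hm), hne, ?_⟩
  rw [Multiset.erase_add_left_pos _ hm]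
  abel

lemma TStep.add_right (h : G.TStep a b) (c : Multiset (V × ℤ)) : G.TStep (a + c) (b + c) :=
  h.lift (· + c) fun _ _ h => h.add_right c

lemma TStep.add (h₁ : G.TStep a b) (h₂ : G.TStep c d) : G.TStep (a + c) (b + d) := by
  refine (h₁.add_right c).trans ?_
  rw [add_comm b c, add_comm b d]
  exact h₂.add_right b

lemma TStep.exists_split (h : G.TStep (a + b) d) :
    ∃ d₁ d₂, d = d₁ + d₂ ∧ G.TStep a d₁ ∧ G.TStep b d₂ := by
  generalize hs : a + b = s at h
  induction h using Relation.ReflTransGen.head_induction_on generalizing a b with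
  | refl => exact ⟨a, b, hs.symm, .refl, .refl⟩
  | head h₁ _ ih =>
    obtain ⟨v, i, hm, hne, rfl⟩ := h₁
    subst hs
    set new := (G.emit v).val.map fun e => (G.r e, i + 1)
    rcases Multiset.mem_add.1 hm with ha | hb
    · obtain ⟨d₁, d₂, rfl, h₁, h₂⟩ := ih (a := a.erase (v, i) + new) (b := b)
        (by rw [Multiset.erase_add_left_pos _ ha]; abel)
      exact ⟨d₁, d₂, rfl, .head ⟨v, i, ha, hne, rfl⟩ h₁, h₂⟩
    · obtain ⟨d₁, d₂, rfl, h₁, h₂⟩ := ih (a := a) (b := b.erase (v, i) + new)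
        (by rw [Multiset.erase_add_right_pos _ hb]; abel)
      exact ⟨d₁, d₂, rfl, h₁, .head ⟨v, i, hb, hne, rfl⟩ h₂⟩

lemma TStep1.diamond (h₁ : G.TStep1 a b) (h₂ : G.TStep1 a c) :
    ∃ d, Relation.ReflGen G.TStep1 b d ∧ G.TStep c d := by
  obtain ⟨v, i, hv, hve, rfl⟩ := h₁
  obtain ⟨w, j, hw, hwe, rfl⟩ := h₂
  by_cases hvw : (v, i) = (w, j)
  · obtain ⟨rfl, rfl⟩ := Prod.mk.inj hvw
    exact ⟨_, .refl, .refl⟩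
  have hw' : (w, j) ∈ a.erase (v, i) := (Multiset.mem_erase_of_ne (Ne.symm hvw)).2 hw
  have hv' : (v, i) ∈ a.erase (w, j) := (Multiset.mem_erase_of_ne hvw).2 hv
  refine ⟨(a.erase (v, i)).erase (w, j) + (G.emit v).val.map (fun e => (G.r e, i + 1))
      + (G.emit w).val.map (fun e => (G.r e, j + 1)),
    .single ⟨w, j, Multiset.mem_add.2 (Or.inl hw'), hwe, ?_⟩,
    .single ⟨v, i, Multiset.mem_add.2 (Or.inl hv'), hve, ?_⟩⟩
  · rw [Multiset.erase_add_left_pos _ hw']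
  · rw [Multiset.erase_add_left_pos _ hv', Multiset.erase_comm]
    abel

variable (G) in
def joinCon : AddCon (Multiset (V × ℤ)) where
  r := Relation.Join G.TStep
  iseqv := Relation.equivalence_join_reflTransGen fun _ _ _ => TStep1.diamond
  add' := fun ⟨x, hax, hbx⟩ ⟨y, hcy, hdy⟩ => ⟨x + y, hax.add hcy, hbx.add hdy⟩

lemma TStep.tcon (h : G.TStep a b) : G.tcon a b := by
  induction h with
  | refl => exact G.tcon.refl _
  | tail _ h ih => exact G.tcon.trans ih (AddConGen.Rel.of _ _ h)

lemma tcon_iff_join : G.tcon a b ↔ Relation.Join G.TStep a b := by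
  refine ⟨fun h => ?_, fun ⟨d, had, hbd⟩ => G.tcon.trans had.tcon (G.tcon.symm hbd.tcon)⟩
  have hle : G.tcon ≤ G.joinCon :=
    AddCon.addConGen_le.2 fun x y hxy => ⟨y, .single hxy, .refl⟩
  exact hle h

lemma NoBifurcation.exists_isWalk_of_tstep {v : V} {i : ℤ} (H : G.NoBifurcation v)
    (h : G.TStep {(v, i)} d) : ∃ w L, G.IsWalk v L w ∧ d = {(w, i + L.length)} := by
  induction h with
  | refl => exact ⟨v, [], rfl, by simp⟩
  | tail _ h ih =>
    obtain ⟨w, L, hw, rfl⟩ := ih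
    obtain ⟨u, j, hm, hne, rfl⟩ := h
    obtain ⟨rfl, rfl⟩ := Prod.mk.inj (Multiset.mem_singleton.1 hm)
    obtain ⟨e, he⟩ := Finset.nonempty_iff_ne_empty.2 hne
    have hse : G.s e = u := (G.mem_emit e u).1 he
    refine ⟨G.r e, L ++ [e], isWalk_append.2 ⟨u, hw, hse, rfl⟩, ?_⟩
    rw [(H.of_reaches hw.reaches).emit_eq hse]
    simp [add_assoc]

end Rewriting

section Weight

variable {V Ed : Type} (G : RFGraph V Ed)

/-- The number of walks from `v` of length `n` or ending earlier at a sink. -/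
def pathCount : ℕ → V → ℕ
  | 0, _ => 1
  | n + 1, v => if (G.emit v).Nonempty then ∑ e ∈ G.emit v, pathCount n (G.r e) else 1

def weight (J : ℤ) (x : V × ℤ) : ℕ := G.pathCount (J - x.2).toNat x.1

def totalWeight (J : ℤ) (m : Multiset (V × ℤ)) : ℕ := (m.map (G.weight J)).sum

variable {G}

lemma pathCount_pos (n : ℕ) (v : V) : 0 < G.pathCount n v := by
  induction n generalizing v with
  | zero => exact Nat.one_pos
  | succ n ih =>
    rw [pathCount]
    split_ifs with hv
    · exact Finset.sum_pos (fun e _ => ih _) hv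
    · exact Nat.one_pos

lemma weight_eq_sum {J i : ℤ} {v : V} (hi : i < J) (hv : (G.emit v).Nonempty) :
    G.weight J (v, i) = ∑ e ∈ G.emit v, G.weight J (G.r e, i + 1) := by
  rw [weight, show (J - i).toNat = (J - (i + 1)).toNat + 1 by omega, pathCount, if_pos hv]
  rfl

lemma totalWeight_add (J : ℤ) (a b : Multiset (V × ℤ)) :
    G.totalWeight J (a + b) = G.totalWeight J a + G.totalWeight J b := by
  simp [totalWeight]

lemma totalWeight_pos (J : ℤ) {m : Multiset (V × ℤ)} (hm : m ≠ 0) :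
    0 < G.totalWeight J m := by
  obtain ⟨x, hx⟩ := Multiset.exists_mem_of_ne_zero hm
  obtain ⟨t, rfl⟩ := Multiset.exists_cons_of_mem hx
  rw [totalWeight, Multiset.map_cons, Multiset.sum_cons]
  exact Nat.add_pos_left (pathCount_pos _ _) _

variable [DecidableEq V] {a b d : Multiset (V × ℤ)} {J : ℤ}

lemma TStep1.totalWeight_eq_and_le (h : G.TStep1 a b) (hb : ∀ y ∈ b, y.2 ≤ J) :
    G.totalWeight J a = G.totalWeight J b ∧ ∀ x ∈ a, x.2 ≤ J := by
  obtain ⟨v, i, hm, hne, rfl⟩ := h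
  have hv := Finset.nonempty_iff_ne_empty.2 hne
  have ⟨e, he⟩ := hv
  have hiJ : i < J := by
    have := hb (G.r e, i + 1) (Multiset.mem_add.2 (Or.inr (Multiset.mem_map_of_mem _ he)))
    simp only at this
    omega
  refine ⟨?_, fun x hx => ?_⟩
  · conv_lhs => rw [← Multiset.cons_erase hm]
    rw [totalWeight, totalWeight, Multiset.map_cons, Multiset.sum_cons, weight_eq_sum hiJ hv,
      Multiset.map_add, Multiset.sum_add, Multiset.map_map, add_comm]
    rfl
  · by_cases hxv : x = (v, i)
    · exact hxv ▸ hiJ.le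
    · exact hb x (Multiset.mem_add.2 (Or.inl ((Multiset.mem_erase_of_ne hxv).2 hx)))

lemma TStep.totalWeight_eq (h : G.TStep a d) (hd : ∀ y ∈ d, y.2 ≤ J) :
    G.totalWeight J a = G.totalWeight J d := by
  revert hd
  induction h with
  | refl => exact fun _ => rfl
  | tail _ h ih =>
    intro hd
    obtain ⟨heq, hc⟩ := h.totalWeight_eq_and_le hd
    exact (ih hc).trans heq

lemma not_tcon_add_self {s : Multiset (V × ℤ)} (hs : s ≠ 0) : ¬ G.tcon a (a + s) := by
  intro h
  obtain ⟨d, h₁, h₂⟩ := tcon_iff_join.1 h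
  obtain ⟨J, hJ⟩ := (d.map Prod.snd).toFinset.bddAbove
  have hd : ∀ y ∈ d, y.2 ≤ J := fun y hy =>
    hJ (by simpa using Multiset.mem_map_of_mem Prod.snd hy)
  have heq := (h₂.totalWeight_eq hd).trans (h₁.totalWeight_eq hd).symm
  rw [totalWeight_add] at heq
  have := totalWeight_pos (G := G) J hs
  omega

end Weight

section TalentedMonoid

variable {V Ed : Type} [DecidableEq V] {G : RFGraph V Ed} {a b u v : V} {L : List Ed}

variable (G) in
def toTM : Multiset (V × ℤ) →+ G.TM := G.tcon.mk'

lemma toTM_eq_toTM {m m' : Multiset (V × ℤ)} : G.toTM m = G.toTM m' ↔ G.tcon m m' :=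
  G.tcon.eq

lemma toTM_surjective : Function.Surjective G.toTM := AddCon.mk'_surjective

lemma tgen_eq_toTM (v : V) (i : ℤ) : G.tgen v i = G.toTM {(v, i)} := rfl

lemma tshift_tgen (n : ℤ) (v : V) (i : ℤ) : G.tshift n (G.tgen v i) = G.tgen v (i + n) :=
  congrArg G.toTM (Multiset.map_singleton _ _)

lemma toTM_eq_zero_iff {m : Multiset (V × ℤ)} : G.toTM m = 0 ↔ m = 0 := by
  refine ⟨fun h => ?_, fun h => h ▸ map_zero _⟩
  by_contra hm
  refine not_tcon_add_self (a := 0) hm (G.tcon.symm ?_)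
  rw [zero_add, ← toTM_eq_toTM, h, map_zero]

lemma tgen_ne_zero (v : V) (i : ℤ) : G.tgen v i ≠ 0 := by
  rw [tgen_eq_toTM, Ne, toTM_eq_zero_iff]
  exact Multiset.singleton_ne_zero _

lemma eq_zero_of_add_eq_zero {x y : G.TM} (h : x + y = 0) : x = 0 := by
  obtain ⟨X, rfl⟩ := toTM_surjective x
  obtain ⟨Y, rfl⟩ := toTM_surjective y
  rw [← map_add, toTM_eq_zero_iff, add_eq_zero] at h
  rw [h.1, map_zero]

lemma eq_zero_of_self_eq_add {x y : G.TM} (h : x = x + y) : y = 0 := by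
  obtain ⟨X, rfl⟩ := toTM_surjective x
  obtain ⟨Y, rfl⟩ := toTM_surjective y
  rw [← map_add, toTM_eq_toTM] at h
  rw [toTM_eq_zero_iff]
  by_contra hY
  exact not_tcon_add_self hY h

lemma tgen_eq_sum (hu : G.emit u ≠ ∅) (i : ℤ) :
    G.tgen u i = ∑ e ∈ G.emit u, G.tgen (G.r e) (i + 1) := by
  have h : G.TStep1 {(u, i)} ((G.emit u).val.map fun e => (G.r e, i + 1)) :=
    ⟨u, i, Multiset.mem_singleton_self _, hu, by simp⟩
  rw [tgen_eq_toTM, toTM_eq_toTM.2 (AddConGen.Rel.of _ _ h),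
    ← Multiset.sum_map_singleton (Multiset.map _ _), map_multiset_sum, Multiset.map_map,
    Multiset.map_map]
  rfl

lemma IsWalk.exists_tgen_eq_add (hw : G.IsWalk a L b) (i : ℤ) :
    ∃ x, G.tgen a i = G.tgen b (i + L.length) + x := by
  classical
  induction L generalizing a i with
  | nil => exact ⟨0, by rw [isWalk_nil.1 hw]; simp⟩
  | cons e L ih =>
    have he : e ∈ G.emit a := (G.mem_emit e a).2 hw.1
    obtain ⟨x, hx⟩ := ih hw.2 (i + 1)
    refine ⟨x + ∑ f ∈ (G.emit a).erase e, G.tgen (G.r f) (i + 1), ?_⟩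
    rw [tgen_eq_sum (Finset.ne_empty_of_mem he), ← Finset.add_sum_erase _ _ he, hx, add_assoc]
    congr 2
    push_cast [List.length_cons]
    ring

lemma NoBifurcation.tgen_eq_of_isWalk (H : G.NoBifurcation a) (hw : G.IsWalk a L b) (i : ℤ) :
    G.tgen a i = G.tgen b (i + L.length) := by
  induction L generalizing a i with
  | nil => rw [isWalk_nil.1 hw]; simp
  | cons e L ih =>
    have hemit := H.emit_eq hw.1
    rw [tgen_eq_sum (by simp [hemit]), hemit, Finset.sum_singleton,
      ih (H.of_reaches (.single ⟨e, hw.1, rfl⟩)) hw.2]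
    congr 1
    push_cast [List.length_cons]
    ring

lemma NoBifurcation.eq_zero_or_eq_zero_of_tgen_eq_add (H : G.NoBifurcation v) {i : ℤ}
    {x y : G.TM} (h : G.tgen v i = x + y) : x = 0 ∨ y = 0 := by
  obtain ⟨X, rfl⟩ := toTM_surjective x
  obtain ⟨Y, rfl⟩ := toTM_surjective y
  rw [tgen_eq_toTM, ← map_add, toTM_eq_toTM, tcon_iff_join] at h
  obtain ⟨d, hvd, hXYd⟩ := h
  obtain ⟨w, L, -, rfl⟩ := H.exists_isWalk_of_tstep hvd
  obtain ⟨d₁, d₂, hd, hX, hY⟩ := hXYd.exists_split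
  have hcard := congrArg Multiset.card hd
  rw [Multiset.card_singleton, Multiset.card_add] at hcard
  rcases (by omega : Multiset.card d₁ = 0 ∨ Multiset.card d₂ = 0) with h₁ | h₂
  · rw [Multiset.card_eq_zero.1 h₁] at hX
    exact Or.inl (toTM_eq_toTM.2 hX.tcon |>.trans (map_zero _))
  · rw [Multiset.card_eq_zero.1 h₂] at hY
    exact Or.inr (toTM_eq_toTM.2 hY.tcon |>.trans (map_zero _))

lemma NoBifurcation.tmin_tgen (H : G.NoBifurcation v) (i : ℤ) : G.TMin (G.tgen v i) := by
  rintro x hx ⟨y, hxy⟩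
  obtain rfl : y = 0 := (H.eq_zero_or_eq_zero_of_tgen_eq_add hxy).resolve_left hx
  exact ⟨0, by simp [hxy]⟩

lemma NoBifurcation.connectsToCycle_of_tgen_eq (H : G.NoBifurcation v) {i j : ℤ}
    (h : G.tgen v i = G.tgen v j) (hij : i ≠ j) : G.ConnectsToCycle v := by
  rw [tgen_eq_toTM, tgen_eq_toTM, toTM_eq_toTM, tcon_iff_join] at h
  obtain ⟨d, hi, hj⟩ := h
  obtain ⟨w, L₁, h₁, rfl⟩ := H.exists_isWalk_of_tstep hi
  obtain ⟨w', L₂, h₂, hd⟩ := H.exists_isWalk_of_tstep hj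
  obtain ⟨rfl, hlen⟩ := Prod.mk.inj (Multiset.singleton_inj.1 hd)
  clear hi hj hd
  wlog hle : L₁.length ≤ L₂.length generalizing i j L₁ L₂
  · exact this hij.symm L₂ h₂ L₁ hlen.symm h₁ (by omega)
  obtain ⟨L, rfl, hL⟩ := H.isWalk_prefix h₁ h₂ hle
  exact hL.connectsToCycle (by rintro rfl; simp at hlen; exact hij hlen) h₁.reaches

lemma noBifurcation_of_tmin {i : ℤ} (h : G.TMin (G.tgen v i)) : G.NoBifurcation v := by
  classical
  intro u hvu
  by_contra! hu
  obtain ⟨e₁, he₁, e₂, he₂, hne⟩ := Finset.one_lt_card.1 hu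
  obtain ⟨L, hL⟩ := exists_isWalk_of_reaches hvu
  obtain ⟨x, hx⟩ := hL.exists_tgen_eq_add i
  set k := i + (L.length : ℤ)
  set rest := G.tgen (G.r e₂) (k + 1) +
    ∑ f ∈ ((G.emit u).erase e₁).erase e₂, G.tgen (G.r f) (k + 1)
  have hsplit : G.tgen u k = G.tgen (G.r e₁) (k + 1) + rest := by
    rw [tgen_eq_sum (Finset.ne_empty_of_mem he₁), ← Finset.add_sum_erase _ _ he₁,
      ← Finset.add_sum_erase _ _ (Finset.mem_erase.2 ⟨hne.symm, he₂⟩)]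
  have hv : G.tgen v i = G.tgen (G.r e₁) (k + 1) + (rest + x) := by
    rw [hx, hsplit, add_assoc]
  obtain ⟨y, hy⟩ := h _ (tgen_ne_zero _ _) ⟨_, hv⟩
  have habsorb : rest + x + y = 0 := eq_zero_of_self_eq_add <| by
    rw [← add_assoc, ← hv]
    exact hy
  exact tgen_ne_zero _ _ (eq_zero_of_add_eq_zero (eq_zero_of_add_eq_zero
    (eq_zero_of_add_eq_zero habsorb)))

lemma NoBifurcation.exists_tgen_eq_of_connectsToCycle (H : G.NoBifurcation v)
    (hc : G.ConnectsToCycle v) (i : ℤ) :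
    ∃ n : ℤ, n ≠ 0 ∧ G.tgen v (i + n) = G.tgen v i := by
  obtain ⟨p, hp, e, he, hve⟩ := hc
  obtain ⟨C, hC, hCw⟩ := hp.exists_isWalk he
  obtain ⟨L, hL⟩ := exists_isWalk_of_reaches hve
  refine ⟨C.length, by simpa using hC, ?_⟩
  calc G.tgen v (i + C.length) = G.tgen (G.s e) (i + C.length + L.length) :=
        H.tgen_eq_of_isWalk hL _
    _ = G.tgen (G.s e) (i + L.length + C.length) := by rw [add_right_comm]
    _ = G.tgen v i := by
        rw [← (H.of_reaches hve).tgen_eq_of_isWalk hCw, ← H.tgen_eq_of_isWalk hL]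

end TalentedMonoid

end RFGraph

/-- A vertex `v` is a line-point (no bifurcation and does not connect to a cycle) if
and only if `v(0) ∈ M_E^{gr}` is minimal and aperiodic. -/
theorem line_point_iff {V Ed : Type} [DecidableEq V] (G : RFGraph V Ed) (v : V) :
    ((∀ u : V, G.Reaches v u → (G.emit u).card ≤ 1) ∧
        ¬ ∃ p : List Ed, G.IsCycle p ∧ ∃ e ∈ p, G.Reaches v (G.s e)) ↔
      (G.TMin (G.tgen v 0) ∧
        ∀ n : ℤ, G.tshift n (G.tgen v 0) = G.tgen v 0 → n = 0) := by
  constructor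
  · rintro ⟨H, hnc⟩
    have H : G.NoBifurcation v := H
    refine ⟨H.tmin_tgen 0, fun n hn => ?_⟩
    rw [RFGraph.tshift_tgen, zero_add] at hn
    by_contra hn0
    exact hnc (H.connectsToCycle_of_tgen_eq hn hn0)
  · rintro ⟨hmin, haper⟩
    have H : G.NoBifurcation v := RFGraph.noBifurcation_of_tmin hmin
    refine ⟨H, fun hc => ?_⟩
    obtain ⟨n, hn0, hn⟩ := H.exists_tgen_eq_of_connectsToCycle hc 0
    exact hn0 (haper n (by rwa [RFGraph.tshift_tgen]))
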